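/- arXiv:1007.2896 — 2 statements merged into one kernel-verified Lean document; each statement's English description precedes it below -/
import Mathlib

section
/- Let I be a type, and for each i : I let L i and R i be the left and right creation operators on ℓ²(List I, ℂ) (so L i (E w) = E (i :: w) and R i (E w) = E (w ++ [i]) for all words w). Let Toep be the topological closure of the unital star subalgebra of bounded operators on ℓ²(List I, ℂ) generated by {L i : i ∈ I}, and Toepᴿ the topological closure of the unital star subalgebra generated by {R i : i ∈ I}. Then there exists a bijective complex-linear isometry Φ : Toep → Toepᴿ which is anti-multiplicative (Φ(A·B) = Φ(B)·Φ(A) for all A, B ∈ Toep), star-preserving (Φ(A†) = Φ(A)† for all A ∈ Toep), unital (Φ(1) = 1), and satisfies Φ(L i) = (R i)† for every i : I. In other words, the Toeplitz algebra Toep and the right Toeplitz algebra Toepᴿ are anti-*-isomorphic. -/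
open scoped ENNReal

/-- The Hilbert space `ℓ²(List I, ℂ)` of square-summable families indexed by words. -/
noncomputable abbrev FockSpace (I : Type*) := lp (fun _ : List I => ℂ) 2

/-- The standard basis vector of `ℓ²(List I, ℂ)` at the word `w`. -/
noncomputable def E {I : Type*} (w : List I) : FockSpace I :=
  letI : DecidableEq (List I) := Classical.decEq _
  lp.single 2 w 1

/-!
The antiunitary involution `W f = star ∘ f ∘ reverse` of `ℓ²(List I, ℂ)` intertwines left and right
creation: `W (L i) W = R i`. Since `W` is an involution with `⟪W x, y⟫ = ⟪W y, x⟫`, the map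
`Φ A = W A† W` is a linear isometric anti-∗-automorphism of `B(ℓ²)`, and it sends `L i` to `(R i)†`
and `R i` to `(L i)†`. Hence `Φ` maps the ∗-algebra generated by the `L i` into the one generated by
the `R i` and back, by continuity also their closures, and as `Φ ∘ Φ = id` it restricts to the
required isomorphism.
-/

open scoped InnerProductSpace

theorem Memℓp.comp_equiv {α β E : Type*} [NormedAddCommGroup E] {p : ℝ≥0∞} (hp : 0 < p.toReal)
    {f : β → E} (hf : Memℓp f p) (e : α ≃ β) : Memℓp (f ∘ e) p :=
  (memℓp_gen_iff hp).2 <| (e.summable_iff (f := fun b => ‖f b‖ ^ p.toReal)).2 <|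
    (memℓp_gen_iff hp).1 hf

namespace lp

section FunCongrLeft

variable {α β E : Type*} [NormedAddCommGroup E] {p : ℝ≥0∞} [Fact (1 ≤ p)]
  (𝕜 : Type*) [NormedRing 𝕜] [Module 𝕜 E] [IsBoundedSMul 𝕜 E]

noncomputable def funCongrLeft (hp : p ≠ ∞) (e : α ≃ β) :
    lp (fun _ : β => E) p ≃ₗᵢ[𝕜] lp (fun _ : α => E) p :=
  have hp' : 0 < p.toReal := ENNReal.toReal_pos (zero_lt_one.trans_le Fact.out).ne' hp
  { toFun f := ⟨f ∘ e, (lp.memℓp f).comp_equiv hp' e⟩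
    invFun f := ⟨f ∘ e.symm, (lp.memℓp f).comp_equiv hp' e.symm⟩
    map_add' _ _ := rfl
    map_smul' _ _ := rfl
    left_inv f := lp.ext <| funext fun b => by simp
    right_inv f := lp.ext <| funext fun a => by simp
    norm_map' f := by
      rw [lp.norm_eq_tsum_rpow hp', lp.norm_eq_tsum_rpow hp']
      exact congrArg (· ^ _) (e.tsum_eq fun b => ‖f b‖ ^ p.toReal) }

end FunCongrLeft

section StarCompInvolution

variable {𝕜 α : Type*} [RCLike 𝕜] {σ : α → α}

noncomputable def starCompInvolution (hσ : Function.Involutive σ) :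
    lp (fun _ : α => 𝕜) 2 ≃ₗᵢ⋆[𝕜] lp (fun _ : α => 𝕜) 2 :=
  (funCongrLeft 𝕜 (ENNReal.ofNat_ne_top (n := 2)) hσ.toPerm).trans (starₗᵢ 𝕜)

variable (hσ : Function.Involutive σ)

@[simp] theorem starCompInvolution_apply (f : lp (fun _ : α => 𝕜) 2) (a : α) :
    starCompInvolution hσ f a = star (f (σ a)) := rfl

theorem starCompInvolution_involutive :
    Function.Involutive (starCompInvolution (𝕜 := 𝕜) hσ) :=
  fun f => lp.ext <| funext fun a => by simp [hσ a]

theorem inner_starCompInvolution_left (f g : lp (fun _ : α => 𝕜) 2) :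
    ⟪starCompInvolution hσ f, g⟫_𝕜 = ⟪starCompInvolution hσ g, f⟫_𝕜 := by
  rw [lp.inner_eq_tsum, lp.inner_eq_tsum, ← hσ.toPerm.tsum_eq]
  refine tsum_congr fun a => ?_
  simp [hσ a, mul_comm]

theorem starCompInvolution_single [DecidableEq α] (a : α) (c : 𝕜) :
    starCompInvolution hσ (lp.single 2 a c) = lp.single 2 (σ a) (star c) :=
  lp.ext <| funext fun b => by simp [Pi.single_apply, hσ.eq_iff, apply_ite star]

end StarCompInvolution

end lp

namespace LinearIsometryEquiv

section ConjOp

variable {𝕜 H : Type*} [RCLike 𝕜] [NormedAddCommGroup H] [NormedSpace 𝕜 H] (J : H ≃ₗᵢ⋆[𝕜] H)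

noncomputable def conjOp (X : H →L[𝕜] H) : H →L[𝕜] H :=
  (J : H →SL[starRingEnd 𝕜] H).comp (X.comp (J : H →SL[starRingEnd 𝕜] H))

@[simp] theorem conjOp_apply (X : H →L[𝕜] H) (x : H) : J.conjOp X x = J (X (J x)) := rfl

@[simp] theorem norm_conjOp (X : H →L[𝕜] H) : ‖J.conjOp X‖ = ‖X‖ := by
  simp [conjOp]

theorem conjOp_add (X Y : H →L[𝕜] H) : J.conjOp (X + Y) = J.conjOp X + J.conjOp Y := by
  ext; simp

theorem conjOp_smul (c : 𝕜) (X : H →L[𝕜] H) :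
    J.conjOp (c • X) = starRingEnd 𝕜 c • J.conjOp X := by
  ext; simp [map_smulₛₗ]

variable {J} (hJ : Function.Involutive J)
include hJ

theorem conjOp_mul (X Y : H →L[𝕜] H) : J.conjOp (X * Y) = J.conjOp X * J.conjOp Y := by
  ext; simp [hJ _]

theorem conjOp_one : J.conjOp (1 : H →L[𝕜] H) = 1 := by
  ext; simp [hJ _]

theorem conjOp_conjOp (X : H →L[𝕜] H) : J.conjOp (J.conjOp X) = X := by
  ext; simp [hJ _]

end ConjOp

section AdjointConj

open ContinuousLinearMap (adjoint)

variable {𝕜 H : Type*} [RCLike 𝕜] [NormedAddCommGroup H] [InnerProductSpace 𝕜 H] [CompleteSpace H]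
  {J : H ≃ₗᵢ⋆[𝕜] H}

theorem adjoint_conjOp (hJ' : ∀ x y, ⟪J x, y⟫_𝕜 = ⟪J y, x⟫_𝕜) (X : H →L[𝕜] H) :
    adjoint (J.conjOp X) = J.conjOp (adjoint X) := by
  refine ((ContinuousLinearMap.eq_adjoint_iff _ _).2 fun x y => ?_).symm
  rw [conjOp_apply, conjOp_apply, hJ', ContinuousLinearMap.adjoint_inner_right, ← inner_conj_symm,
    hJ', inner_conj_symm]

variable (hJ : Function.Involutive J) (hJ' : ∀ x y, ⟪J x, y⟫_𝕜 = ⟪J y, x⟫_𝕜)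

noncomputable def adjointConj : (H →L[𝕜] H) ≃ₗᵢ[𝕜] (H →L[𝕜] H) where
  toFun A := J.conjOp (adjoint A)
  invFun A := J.conjOp (adjoint A)
  map_add' A B := by simp [conjOp_add]
  map_smul' c A := by simp [map_smulₛₗ, conjOp_smul]
  left_inv A := by simp [adjoint_conjOp hJ', conjOp_conjOp hJ]
  right_inv A := by simp [adjoint_conjOp hJ', conjOp_conjOp hJ]
  norm_map' A := by simp

@[simp] theorem adjointConj_apply (A : H →L[𝕜] H) :
    adjointConj hJ hJ' A = J.conjOp (adjoint A) := rfl

@[simp] theorem adjointConj_symm : (adjointConj hJ hJ').symm = adjointConj hJ hJ' := rfl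

theorem adjointConj_adjointConj (A : H →L[𝕜] H) :
    adjointConj hJ hJ' (adjointConj hJ hJ' A) = A :=
  (adjointConj hJ hJ').symm_apply_apply A

theorem adjointConj_mul (A B : H →L[𝕜] H) :
    adjointConj hJ hJ' (A * B) = adjointConj hJ hJ' B * adjointConj hJ hJ' A := by
  simp [ContinuousLinearMap.mul_def, ContinuousLinearMap.adjoint_comp, ← conjOp_mul hJ]

theorem adjointConj_one : adjointConj hJ hJ' 1 = 1 := by
  simp [← ContinuousLinearMap.star_eq_adjoint, conjOp_one hJ]

theorem adjointConj_star (A : H →L[𝕜] H) :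
    adjointConj hJ hJ' (star A) = star (adjointConj hJ hJ' A) := by
  simp [ContinuousLinearMap.star_eq_adjoint, adjoint_conjOp hJ']

theorem mapsTo_adjointConj_adjoin {s : Set (H →L[𝕜] H)} {T : StarSubalgebra 𝕜 (H →L[𝕜] H)}
    (h : Set.MapsTo (adjointConj hJ hJ') s T) :
    Set.MapsTo (adjointConj hJ hJ') (StarAlgebra.adjoin 𝕜 s) T := by
  intro x hx
  induction hx using StarAlgebra.adjoin_induction with
  | mem x hx => exact h hx
  | algebraMap r =>
    rw [Algebra.algebraMap_eq_smul_one, map_smul, adjointConj_one]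
    exact T.smul_mem T.one_mem r
  | add x y _ _ hx hy => rw [map_add]; exact T.add_mem hx hy
  | mul x y _ _ hx hy => rw [adjointConj_mul]; exact T.mul_mem hy hx
  | star x _ hx => rw [adjointConj_star]; exact star_mem hx

end AdjointConj

section RestrictStarSubalgebra

variable {𝕜 A : Type*} [NormedField 𝕜] [StarRing 𝕜] [NormedRing A] [NormedAlgebra 𝕜 A]
  [StarRing A] [StarModule 𝕜 A] (e : A ≃ₗᵢ[𝕜] A) {S T : StarSubalgebra 𝕜 A}
  (hST : Set.MapsTo e S T) (hTS : Set.MapsTo e.symm T S)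

def restrictStarSubalgebra : S ≃ₗᵢ[𝕜] T where
  toFun x := ⟨e x, hST x.2⟩
  invFun y := ⟨e.symm y, hTS y.2⟩
  map_add' x y := Subtype.ext (map_add e x y)
  map_smul' c x := Subtype.ext (e.map_smul c x)
  left_inv x := Subtype.ext (e.symm_apply_apply x)
  right_inv y := Subtype.ext (e.apply_symm_apply y)
  norm_map' x := e.norm_map x

@[simp] theorem coe_restrictStarSubalgebra_apply (x : S) :
    (e.restrictStarSubalgebra hST hTS x : A) = e x := rfl

end RestrictStarSubalgebra

end LinearIsometryEquiv

theorem E_eq {I : Type*} [DecidableEq (List I)] (w : List I) : E w = lp.single 2 w (1 : ℂ) := by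
  unfold E; congr; subsingleton

namespace FockSpace

variable {I : Type*}

theorem ext_E {A B : FockSpace I →L[ℂ] FockSpace I} (h : ∀ w, A (E w) = B (E w)) : A = B := by
  classical
  refine lp.ext_continuousLinearMap (ENNReal.ofNat_ne_top (n := 2)) fun w => ?_
  refine ContinuousLinearMap.ext_ring ?_
  simpa [E_eq] using h w

noncomputable abbrev reverseConj : FockSpace I ≃ₗᵢ⋆[ℂ] FockSpace I :=
  lp.starCompInvolution List.reverse_involutive

theorem reverseConj_E (w : List I) : reverseConj (E w) = E w.reverse := by
  classical
  simp [E_eq, lp.starCompInvolution_single]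

theorem conjOp_reverseConj_of_creation {L R : FockSpace I →L[ℂ] FockSpace I} {i : I}
    (hL : ∀ w, L (E w) = E (i :: w)) (hR : ∀ w, R (E w) = E (w ++ [i])) :
    reverseConj.conjOp L = R :=
  ext_E fun w => by simp [reverseConj_E, hL, hR]

noncomputable abbrev reverseAdjoint :
    (FockSpace I →L[ℂ] FockSpace I) ≃ₗᵢ[ℂ] (FockSpace I →L[ℂ] FockSpace I) :=
  LinearIsometryEquiv.adjointConj (lp.starCompInvolution_involutive List.reverse_involutive)
    (lp.inner_starCompInvolution_left List.reverse_involutive)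

theorem reverseAdjoint_of_creation {L R : FockSpace I →L[ℂ] FockSpace I} {i : I}
    (hL : ∀ w, L (E w) = E (i :: w)) (hR : ∀ w, R (E w) = E (w ++ [i])) :
    reverseAdjoint L = star R := by
  rw [LinearIsometryEquiv.adjointConj_apply,
    ← LinearIsometryEquiv.adjoint_conjOp (lp.inner_starCompInvolution_left _),
    conjOp_reverseConj_of_creation hL hR, ContinuousLinearMap.star_eq_adjoint]

theorem mapsTo_reverseAdjoint {L R : I → FockSpace I →L[ℂ] FockSpace I}
    (h : ∀ i, reverseAdjoint (L i) = star (R i)) :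
    Set.MapsTo (reverseAdjoint (I := I)) (StarAlgebra.adjoin ℂ (Set.range L)).topologicalClosure
      (StarAlgebra.adjoin ℂ (Set.range R)).topologicalClosure := by
  have hgen : Set.MapsTo reverseAdjoint (Set.range L) (StarAlgebra.adjoin ℂ (Set.range R)) := by
    rintro _ ⟨i, rfl⟩
    rw [h]
    exact star_mem (StarAlgebra.subset_adjoin ℂ _ ⟨i, rfl⟩)
  exact fun _ hx => map_mem_closure reverseAdjoint.continuous hx
    (LinearIsometryEquiv.mapsTo_adjointConj_adjoin _ _ hgen)

end FockSpace

open FockSpace LinearIsometryEquiv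

/-- Let `L i` and `R i` be the left and right creation operators on
`ℓ²(List I, ℂ)`.  Let `Toep` be the C*-algebra generated by the `L i` (the closure of
the unital star subalgebra they generate) and `Toepᴿ` the C*-algebra generated by the
`R i`.  Then there is a bijective linear isometry `Φ : Toep → Toepᴿ` which is
anti-multiplicative, star-preserving, unital, and sends each `L i` to `(R i)†`:
the Toeplitz algebra and the right Toeplitz algebra are anti-*-isomorphic. -/
theorem toeplitz_anti_star_isomorphic {I : Type*}
    (L R : I → (FockSpace I →L[ℂ] FockSpace I))
    (hL : ∀ i, ∀ w : List I, L i (E w) = E (i :: w))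
    (hR : ∀ i, ∀ w : List I, R i (E w) = E (w ++ [i]))
    (Toep ToepR : StarSubalgebra ℂ (FockSpace I →L[ℂ] FockSpace I))
    (hToep : Toep = (StarAlgebra.adjoin ℂ (Set.range L)).topologicalClosure)
    (hToepR : ToepR = (StarAlgebra.adjoin ℂ (Set.range R)).topologicalClosure)
    (hmem : ∀ i, L i ∈ Toep) :
    ∃ Φ : Toep ≃ₗᵢ[ℂ] ToepR,
      (∀ A B : Toep,
        ((Φ (A * B) : ToepR) : FockSpace I →L[ℂ] FockSpace I) = ↑(Φ B) * ↑(Φ A)) ∧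
      (∀ A : Toep,
        ((Φ (star A) : ToepR) : FockSpace I →L[ℂ] FockSpace I) = star ↑(Φ A)) ∧
      ((Φ 1 : ToepR) : FockSpace I →L[ℂ] FockSpace I) = 1 ∧
      (∀ i, ((Φ ⟨L i, hmem i⟩ : ToepR) : FockSpace I →L[ℂ] FockSpace I) =
        ContinuousLinearMap.adjoint (R i)) := by
  have hLR i : reverseAdjoint (L i) = star (R i) := reverseAdjoint_of_creation (hL i) (hR i)
  have hRL i : reverseAdjoint (R i) = star (L i) := by
    rw [← star_star (R i), ← hLR, ← adjointConj_star, adjointConj_adjointConj]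
  subst hToep hToepR
  refine ⟨reverseAdjoint.restrictStarSubalgebra (mapsTo_reverseAdjoint hLR)
      (by simpa using mapsTo_reverseAdjoint hRL), fun A B => ?_, fun A => ?_, ?_, fun i => ?_⟩
  all_goals simp only [coe_restrictStarSubalgebra_apply, MulMemClass.coe_mul,
    StarMemClass.coe_star, OneMemClass.coe_one]
  · exact adjointConj_mul _ _ _ _
  · exact adjointConj_star _ _ _
  · exact adjointConj_one _ _
  · exact (hLR i).trans (ContinuousLinearMap.star_eq_adjoint _)
end

section
/- Equip ℕ with the quiver structure having exactly one arrow from m to m+1 for each m : ℕ (Hom m n := PLift (n = m + 1)) and no other arrows; this is the 1-regular tree T₁. Then in the free groupoid on this quiver, any two parallel morphisms are equal: for all objects i, j of the free groupoid, the hom-set from i to j is a subsingleton. Equivalently, every element of the graph groupoid of T₁ connecting a vertex i to a vertex j is the unique reduced finite path between them, so the reduced finite path set of the shadowed graph of T₁ is the disjoint union of the finite path set of T₁ and that of its shadow T₁⁻¹. -/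
/-!
A free groupoid is thin as soon as there are morphisms `p X : R ⟶ X` out of a base object
with `p a ≫ e = p b` for every generating arrow `e : a ⟶ b`: then `g ↦ (p X)⁻¹ ≫ p Y` is a
functor agreeing with the identity on generators, hence is the identity by the universal
property, so every `g : X ⟶ Y` equals `(p X)⁻¹ ≫ p Y`. On `T₁` the paths
`0 ⟶ 1 ⟶ ⋯ ⟶ n` form such a family.
-/

/-- The vertex set of the 1-regular tree `T₁`: the natural numbers. -/
def OneTree : Type := ℕ

/-- The quiver structure of the 1-regular tree: exactly one arrow from `m` to `m + 1`
for each `m : ℕ`, and no other arrows. -/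
instance : Quiver OneTree := ⟨fun m n => PLift ((show ℕ from n) = (show ℕ from m) + 1)⟩

open CategoryTheory

namespace Quiver.FreeGroupoid

variable {V : Type*} [Quiver V] {R : Quiver.FreeGroupoid V}
  (p : ∀ X : Quiver.FreeGroupoid V, R ⟶ X)

def conjByPotential : Quiver.FreeGroupoid V ⥤ Quiver.FreeGroupoid V where
  obj X := X
  map {X Y} _ := Groupoid.inv (p X) ≫ p Y
  map_comp _ _ := by simp

variable {p}

theorem conjByPotential_eq_id
    (hp : ∀ {a b : V} (e : a ⟶ b), p ((of V).obj a) ≫ (of V).map e = p ((of V).obj b)) :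
    conjByPotential p = 𝟭 _ := by
  have hgen : of V ⋙q (conjByPotential p).toPrefunctor = of V := by
    fapply Prefunctor.ext
    · intro _; rfl
    · intro a b e
      change Groupoid.inv (p _) ≫ p _ = _
      rw [← hp e, ← Category.assoc, Groupoid.inv_comp, Category.id_comp]
  rw [lift_unique _ _ hgen, ← lift_unique (of V) (𝟭 _) rfl]

theorem hom_eq_inv_comp_of_potential
    (hp : ∀ {a b : V} (e : a ⟶ b), p ((of V).obj a) ≫ (of V).map e = p ((of V).obj b))
    {X Y : Quiver.FreeGroupoid V} (g : X ⟶ Y) : g = Groupoid.inv (p X) ≫ p Y :=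
  (eq_of_heq (Functor.hcongr_hom (conjByPotential_eq_id hp) g)).symm

theorem isThin_of_potential
    (hp : ∀ {a b : V} (e : a ⟶ b), p ((of V).obj a) ≫ (of V).map e = p ((of V).obj b)) :
    Quiver.IsThin (Quiver.FreeGroupoid V) := fun _ _ =>
  ⟨fun g h => (hom_eq_inv_comp_of_potential hp g).trans (hom_eq_inv_comp_of_potential hp h).symm⟩

end Quiver.FreeGroupoid

namespace OneTree

open Quiver.FreeGroupoid

def pathFromZero : ∀ n : ℕ, (of OneTree).obj (0 : ℕ) ⟶ (of OneTree).obj n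
  | 0 => 𝟙 _
  | n + 1 => pathFromZero n ≫ (of OneTree).map (X := n) (Y := n + 1) ⟨rfl⟩

theorem pathFromZero_comp_map {a b : OneTree} (e : a ⟶ b) :
    pathFromZero a ≫ (of OneTree).map e = pathFromZero b := by
  obtain ⟨h⟩ := e
  obtain rfl : b = Nat.succ a := h
  rfl

end OneTree

/-- In the graph groupoid of the 1-regular tree `T₁` — i.e. the free
groupoid on the quiver `ℕ` with one arrow `m ⟶ m + 1` for each `m`, built from reduced
finite paths in the shadowed graph — any two parallel morphisms are equal: each hom-set
is a subsingleton.  Equivalently, every element of the graph groupoid connecting a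
vertex `i` to a vertex `j` is the unique reduced finite path between them, so the
reduced finite path set of the shadowed graph of `T₁` is the disjoint union of the
finite path set of `T₁` and that of its shadow `T₁⁻¹`. -/
theorem oneTree_freeGroupoid_hom_subsingleton
    (i j : Quiver.FreeGroupoid OneTree) : Subsingleton (i ⟶ j) :=
  Quiver.FreeGroupoid.isThin_of_potential (V := OneTree)
    (p := fun X => OneTree.pathFromZero X.as) OneTree.pathFromZero_comp_map i j
end
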